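/- Let A, B, A', B' be finite nonempty sets, let (p_{ab})_{(a,b)∈A×B} be a probability distribution, and for each (a,b) let (q_{a'b'|ab})_{(a',b')∈A'×B'} be a probability distribution. Define m_{b'|ab} := ∑_{a'} q_{a'b'|ab} and the joint distribution P(a,b,b') := p_{ab} · m_{b'|ab}. Let {|b⟩⟨b|}_{b∈B} and {|b'⟩⟨b'|}_{b'∈B'} denote diagonal standard basis matrix units on ℂ^{|B|} and ℂ^{|B'|}. Then χ({p_{ab}, |b⟩⟨b| ⊗ ∑_{b'} m_{b'|ab} |b'⟩⟨b'|}) − χ({p_{ab}, |b⟩⟨b|}) = I(A;B'|B), where I(A;B'|B) := H(B'|B) − H(B'|A,B) is the conditional mutual information of P, with H(B'|B) := H(P_{B,B'}) − H(P_B) and H(B'|A,B) := H(P) − H(P_{A,B}) in terms of Shannon entropies of the indicated marginals of P. -/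

import Mathlib

/-!
Every state in both ensembles is diagonal in the standard product basis, so each von Neumann
entropy is the Shannon entropy of the diagonal, and the Holevo information of a diagonal ensemble
is `H(∑ᵢ pᵢ dᵢ) - ∑ᵢ pᵢ H(dᵢ)`. The averaged states have diagonals `P_{B,B'}` and `P_B`; the
members `|b⟩⟨b| ⊗ m_{·|ab}` have entropy `H(m_{·|ab})` and the `|b⟩⟨b|` are pure. The chain rule
`H(P) = H(p) + ∑ p_{ab} H(m_{·|ab})`, together with `P_{A,B} = p`, identifies the remaining
term `∑ p_{ab} H(m_{·|ab})` with `H(B'|A,B)`.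
-/

open scoped Kronecker BigOperators ComplexOrder

noncomputable def vNEntropy {n : Type*} [Fintype n] [DecidableEq n] (ρ : Matrix n n ℂ) : ℝ :=
  if h : ρ.IsHermitian then -∑ k, h.eigenvalues k * Real.logb 2 (h.eigenvalues k) else 0

def IsDensityMatrix {n : Type*} [Fintype n] [DecidableEq n] (ρ : Matrix n n ℂ) : Prop :=
  ρ.PosSemidef ∧ ρ.trace = 1

noncomputable def shannonH {I : Type*} [Fintype I] (p : I → ℝ) : ℝ :=
  -∑ i, p i * Real.logb 2 (p i)

noncomputable def holevo {I n : Type*} [Fintype I] [Fintype n] [DecidableEq n]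
    (p : I → ℝ) (ρ : I → Matrix n n ℂ) : ℝ :=
  vNEntropy (∑ i, (p i : ℂ) • ρ i) - ∑ i, p i * vNEntropy (ρ i)

open Matrix

lemma Matrix.IsHermitian.map_eigenvalues_diagonal {𝕜 n : Type*} [RCLike 𝕜] [Fintype n]
    [DecidableEq n] (d : n → ℝ) (h : (diagonal fun i => (d i : 𝕜)).IsHermitian) :
    Finset.univ.val.map h.eigenvalues = Finset.univ.val.map d := by
  have hroots := h.roots_charpoly_eq_eigenvalues
  rw [charpoly_diagonal, Polynomial.roots_prod _ _ (by simp [Finset.prod_ne_zero_iff,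
    Polynomial.X_sub_C_ne_zero])] at hroots
  simp only [Polynomial.roots_X_sub_C, Multiset.bind_singleton] at hroots
  refine Multiset.map_injective (RCLike.ofReal_injective (K := 𝕜)) ?_
  rw [Multiset.map_map, Multiset.map_map, ← hroots]
  rfl

lemma vNEntropy_diagonal {n : Type*} [Fintype n] [DecidableEq n] (d : n → ℝ) :
    vNEntropy (diagonal fun i => (d i : ℂ)) = shannonH d := by
  have h : (diagonal fun i => (d i : ℂ)).IsHermitian :=
    isHermitian_diagonal_of_self_adjoint _ (by ext; simp)
  have hsum := congrArg (fun s => (s.map fun x => x * Real.logb 2 x).sum)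
    (h.map_eigenvalues_diagonal d)
  simp only [Multiset.map_map] at hsum
  rw [vNEntropy, dif_pos h, shannonH]
  exact congrArg Neg.neg hsum

lemma holevo_diagonal {I n : Type*} [Fintype I] [Fintype n] [DecidableEq n]
    (p : I → ℝ) (d : I → n → ℝ) :
    holevo p (fun i => diagonal fun x => (d i x : ℂ))
      = shannonH (fun x => ∑ i, p i * d i x) - ∑ i, p i * shannonH (d i) := by
  have havg : ∑ i, (p i : ℂ) • diagonal (fun x => (d i x : ℂ))
      = diagonal fun x => ((∑ i, p i * d i x : ℝ) : ℂ) := by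
    ext x y
    by_cases hxy : x = y <;> simp [Matrix.sum_apply, hxy]
  simp only [holevo, havg, vNEntropy_diagonal]

lemma single_one_eq_diagonal_pi_single {n : Type*} [DecidableEq n] (b : n) :
    single b b (1 : ℂ) = diagonal fun x => ((Pi.single b 1 : n → ℝ) x : ℂ) := by
  rw [← diagonal_single]
  congr 1
  ext x
  rcases eq_or_ne x b with rfl | hx <;> simp [*]

lemma single_one_kronecker_sum_smul_single {m n : Type*} [DecidableEq m] [Fintype n]
    [DecidableEq n] (b : m) (w : n → ℝ) :
    single b b (1 : ℂ) ⊗ₖ ∑ c, (w c : ℂ) • single c c (1 : ℂ)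
      = diagonal fun x => (((Pi.single b 1 : m → ℝ) x.1 * w x.2 : ℝ) : ℂ) := by
  simp only [smul_single, smul_eq_mul, mul_one, sum_single_eq_diagonal]
  simp only [single_one_eq_diagonal_pi_single b, diagonal_kronecker_diagonal, Complex.ofReal_mul]

lemma mul_mul_logb_mul (b x y : ℝ) :
    x * y * Real.logb b (x * y) = x * (y * Real.logb b y) + x * Real.logb b x * y := by
  rcases eq_or_ne x 0 with rfl | hx
  · simp
  rcases eq_or_ne y 0 with rfl | hy
  · simp
  rw [Real.logb_mul hx hy]
  ring

lemma shannonH_chain_rule {α β : Type*} [Fintype α] [Fintype β] (f : α → ℝ) (g : α → β → ℝ)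
    (hg : ∀ a, ∑ b, g a b = 1) :
    shannonH (fun x : α × β => f x.1 * g x.1 x.2) = shannonH f + ∑ a, f a * shannonH (g a) := by
  simp only [shannonH, Fintype.sum_prod_type, mul_mul_logb_mul, Finset.sum_add_distrib,
    ← Finset.mul_sum, hg, mul_one, mul_neg, Finset.sum_neg_distrib]
  ring

lemma shannonH_pi_single {α : Type*} [Fintype α] [DecidableEq α] (a : α) :
    shannonH (Pi.single a 1 : α → ℝ) = 0 := by
  refine neg_eq_zero.mpr (Finset.sum_eq_zero fun x _ => ?_)
  rcases eq_or_ne x a with rfl | hx <;> simp [*]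

lemma shannonH_pi_single_mul {α β : Type*} [Fintype α] [DecidableEq α] [Fintype β] (a : α)
    (g : β → ℝ) (hg : ∑ b, g b = 1) :
    shannonH (fun x : α × β => (Pi.single a 1 : α → ℝ) x.1 * g x.2) = shannonH g := by
  rw [shannonH_chain_rule _ (fun _ => g) (fun _ => hg), shannonH_pi_single]
  simp [Pi.single_apply]

theorem stmt9_general {A B A' B' : Type}
    [Fintype A] [Fintype B] [DecidableEq B]
    [Fintype A'] [Fintype B'] [DecidableEq B']
    (p : A × B → ℝ)
    (q : A × B → A' × B' → ℝ)
    (hq1 : ∀ ab, ∑ a'b', q ab a'b' = 1)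
    (mq : A × B → B' → ℝ) (hmq : ∀ ab b', mq ab b' = ∑ a', q ab (a', b'))
    (P : (A × B) × B' → ℝ) (hP : ∀ ab b', P (ab, b') = p ab * mq ab b')
    (PB : B → ℝ) (hPB : ∀ b, PB b = ∑ a, ∑ b', P ((a, b), b'))
    (PBB' : B × B' → ℝ) (hPBB' : ∀ b b', PBB' (b, b') = ∑ a, P ((a, b), b'))
    (PAB : A × B → ℝ) (hPAB : ∀ ab, PAB ab = ∑ b', P (ab, b')) :
    holevo p (fun ab => (Matrix.single ab.2 ab.2 (1 : ℂ) : Matrix B B ℂ) ⊗ₖ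
        (∑ b', ((mq ab b' : ℝ) : ℂ) • Matrix.single b' b' (1 : ℂ)))
      - holevo p (fun ab => (Matrix.single ab.2 ab.2 (1 : ℂ) : Matrix B B ℂ))
      = (shannonH PBB' - shannonH PB) - (shannonH P - shannonH PAB) := by
  have hmq1 : ∀ ab, ∑ b', mq ab b' = 1 := fun ab => by
    simp_rw [hmq]
    exact (Fintype.sum_prod_type_right _).symm.trans (hq1 ab)
  obtain rfl : P = fun x => p x.1 * mq x.1 x.2 := funext fun x => hP x.1 x.2
  have hPAB_eq : PAB = p := funext fun ab => by simp [hPAB, ← Finset.mul_sum, hmq1]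
  have hPB_eq : PB = fun b => ∑ ab : A × B, p ab * (Pi.single ab.2 1 : B → ℝ) b :=
    funext fun b => by simp [hPB, ← Finset.mul_sum, hmq1, Fintype.sum_prod_type, Pi.single_apply]
  have hPBB'_eq : PBB' =
      fun x => ∑ ab : A × B, p ab * ((Pi.single ab.2 1 : B → ℝ) x.1 * mq ab x.2) :=
    funext fun x => by simp [hPBB', Fintype.sum_prod_type, Pi.single_apply]
  simp only [single_one_kronecker_sum_smul_single]
  simp only [single_one_eq_diagonal_pi_single, holevo_diagonal, shannonH_pi_single_mul _ _ (hmq1 _),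
    shannonH_pi_single, shannonH_chain_rule _ _ hmq1, hPAB_eq, hPB_eq, hPBB'_eq, mul_zero,
    Finset.sum_const_zero]
  ring

/-- For a classical two-way channel, `Δχ_⇒(E) = I(A;B'|B)` (Section 3.4 of the paper):
the change in Bob's local Holevo information equals the conditional mutual information
`H(B'|B) − H(B'|A,B)` of the joint distribution `P(a,b,b') = p_{ab} m_{b'|ab}`. -/
theorem stmt9 {A B A' B' : Type}
    [Fintype A] [Nonempty A] [Fintype B] [DecidableEq B] [Nonempty B]
    [Fintype A'] [Nonempty A'] [Fintype B'] [DecidableEq B'] [Nonempty B']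
    (p : A × B → ℝ) (hp : ∀ ab, 0 ≤ p ab) (hp1 : ∑ ab, p ab = 1)
    (q : A × B → A' × B' → ℝ) (hq : ∀ ab a'b', 0 ≤ q ab a'b')
    (hq1 : ∀ ab, ∑ a'b', q ab a'b' = 1)
    (mq : A × B → B' → ℝ) (hmq : ∀ ab b', mq ab b' = ∑ a', q ab (a', b'))
    (P : (A × B) × B' → ℝ) (hP : ∀ ab b', P (ab, b') = p ab * mq ab b')
    (PB : B → ℝ) (hPB : ∀ b, PB b = ∑ a, ∑ b', P ((a, b), b'))
    (PBB' : B × B' → ℝ) (hPBB' : ∀ b b', PBB' (b, b') = ∑ a, P ((a, b), b'))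
    (PAB : A × B → ℝ) (hPAB : ∀ ab, PAB ab = ∑ b', P (ab, b')) :
    holevo p (fun ab => (Matrix.single ab.2 ab.2 (1 : ℂ) : Matrix B B ℂ) ⊗ₖ
        (∑ b', ((mq ab b' : ℝ) : ℂ) • Matrix.single b' b' (1 : ℂ)))
      - holevo p (fun ab => (Matrix.single ab.2 ab.2 (1 : ℂ) : Matrix B B ℂ))
      = (shannonH PBB' - shannonH PB) - (shannonH P - shannonH PAB) :=
  stmt9_general p q hq1 mq hmq P hP PB hPB PBB' hPBB' PAB hPAB
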